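/- Let A be an artin algebra with Jacobson radical J and M a finitely generated semilocal A-module (a finite direct sum of modules with simple top) of Loewy length m. For each indecomposable direct summand X of ⊕_{i=1}^m M/MJ^i of Loewy length m, the canonical surjection ρ : X → X/XJ^{m-1} induces an isomorphism Hom_A(X/XJ^{m-1}, N) ≅ Rad_{mod A}(X, N) for every N ∈ add(⊕_{i=1}^m M/MJ^i). (This is Lemma 2.4 of the paper.) -/

import Mathlib

/-- The Jacobson radical of a ring `A`. -/
def jacobsonRad (A : Type) [Ring A] : Ideal A := Ideal.jacobson ⊥

/-- The submodule `I • N` (span of products), valid over noncommutative rings. -/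
def smulSub {A : Type} [Ring A] (I : Ideal A) {M : Type} [AddCommGroup M] [Module A M]
    (N : Submodule A M) : Submodule A M :=
  Submodule.span A {x | ∃ a ∈ I, ∃ y ∈ N, x = a • y}

/-- `radPow A M n` is the submodule `M J(A)^n` (written for left modules: `J(A)^n M`). -/
def radPow (A : Type) [Ring A] (M : Type) [AddCommGroup M] [Module A M] : ℕ → Submodule A M
  | 0 => ⊤
  | n + 1 => smulSub (jacobsonRad A) (radPow A M n)

lemma radPow_succ_le (A : Type) [Ring A] (M : Type) [AddCommGroup M] [Module A M] (n : ℕ) :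
    radPow A M (n + 1) ≤ radPow A M n := by
  show smulSub (jacobsonRad A) (radPow A M n) ≤ radPow A M n
  rw [smulSub, Submodule.span_le]
  rintro x ⟨a, _, y, hy, rfl⟩
  exact Submodule.smul_mem _ a hy

lemma radPow_le_one (A : Type) [Ring A] (M : Type) [AddCommGroup M] [Module A M]
    {j : ℕ} (hj : 1 ≤ j) : radPow A M j ≤ radPow A M 1 := by
  induction j with
  | zero => omega
  | succ n ih =>
    rcases Nat.lt_or_ge 1 (n+1) with h | h
    · exact le_trans (radPow_succ_le A M n) (ih (by omega))
    · have : n + 1 = 1 := by omega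
      rw [this]

/-- `X` belongs to `add M`: it is a direct summand of a finite direct sum of copies of `M`. -/
def InAdd (A : Type) [Ring A] (M : Type) [AddCommGroup M] [Module A M]
    (X : Type) [AddCommGroup X] [Module A X] : Prop :=
  ∃ (n : ℕ) (Y : Type) (_ : AddCommGroup Y) (_ : Module A Y),
    Nonempty ((X × Y) ≃ₗ[A] (Fin n → M))

/-- `f` lies in the Jacobson radical of the category of `A`-modules. -/
def IsRadMor (A : Type) [Ring A] {M N : Type} [AddCommGroup M] [Module A M]
    [AddCommGroup N] [Module A N] (f : M →ₗ[A] N) : Prop :=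
  ∀ g : N →ₗ[A] M, IsUnit ((1 : Module.End A M) - (g ∘ₗ f : Module.End A M))

/-- The ADR module `⊕_{j=1}^m A/J^j`. -/
abbrev ADRModule (A : Type) [Ring A] (m : ℕ) : Type :=
  ∀ j : Fin m, A ⧸ radPow A A (j.1 + 1)

/-- The module `⊕_{i=1}^m M/MJ^i` whose endomorphism ring is the ADR algebra of `M`. -/
abbrev ADRModuleOf (A : Type) [Ring A] (M : Type) [AddCommGroup M] [Module A M] (m : ℕ) :
    Type := ∀ i : Fin m, M ⧸ radPow A M (i.1 + 1)

/-- `X` is an indecomposable module. -/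
def Indecomp (A : Type) [Ring A] (X : Type) [AddCommGroup X] [Module A X] : Prop :=
  Nontrivial X ∧ ∀ e : Module.End A X, e * e = e → e = 0 ∨ e = 1

/-!
A radical map `f : X → N` kills `X J^(m-1)`: since `N` embeds in a power of `⊕ M/MJ^i`, which is
a finite product of the local modules `L_j / L_j J^(i+1)`, it suffices to test `f` against
maps to such a local `C`. If `C J^(m-1) = 0` there is nothing to do; otherwise `X → C` is a
radical map onto a summand of Loewy length `m`, hence not surjective, hence (`C` being local)
lands in `C J`, and so sends `X J^(m-1)` into `C J^m = 0`. Conversely `g ∘ ρ` kills the nonzero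
`X J^(m-1)`, and a non-injective endomorphism of the indecomposable finite-length `X` is
nilpotent (Fitting), which makes `g ∘ ρ` radical.
-/

open Submodule

variable {A : Type} [Ring A]

section RadicalFiltration

variable {M N : Type} [AddCommGroup M] [Module A M] [AddCommGroup N] [Module A N]

lemma smulSub_mono (I : Ideal A) {U V : Submodule A M} (h : U ≤ V) :
    smulSub I U ≤ smulSub I V :=
  span_mono fun _ ⟨a, ha, y, hy, hx⟩ => ⟨a, ha, y, h hy, hx⟩

lemma smulSub_le (I : Ideal A) (U : Submodule A M) : smulSub I U ≤ U := by
  rw [smulSub, span_le]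
  rintro x ⟨a, -, y, hy, rfl⟩
  exact U.smul_mem a hy

lemma smulSub_sup_le (I : Ideal A) (U V : Submodule A M) :
    smulSub I (U ⊔ V) ≤ smulSub I U ⊔ smulSub I V := by
  rw [smulSub, span_le]
  rintro x ⟨a, ha, y, hy, rfl⟩
  obtain ⟨u, hu, v, hv, rfl⟩ := mem_sup.mp hy
  rw [smul_add]
  exact add_mem_sup (subset_span ⟨a, ha, u, hu, rfl⟩) (subset_span ⟨a, ha, v, hv, rfl⟩)

lemma map_smulSub (f : M →ₗ[A] N) (I : Ideal A) (U : Submodule A M) :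
    (smulSub I U).map f = smulSub I (U.map f) := by
  rw [smulSub, smulSub, map_span]
  congr 1
  ext x
  constructor
  · rintro ⟨y, ⟨a, ha, z, hz, rfl⟩, rfl⟩
    exact ⟨a, ha, f z, mem_map_of_mem hz, map_smul f a z⟩
  · rintro ⟨a, ha, y, ⟨z, hz, rfl⟩, rfl⟩
    exact ⟨a • z, ⟨a, ha, z, hz, rfl⟩, map_smul f a z⟩

lemma map_radPow_le_of_range_le (f : M →ₗ[A] N) {k : ℕ} (hk : LinearMap.range f ≤ radPow A N k)
    (n : ℕ) : (radPow A M n).map f ≤ radPow A N (n + k) := by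
  induction n with
  | zero => simpa [radPow, ← LinearMap.range_eq_map] using hk
  | succ n ih =>
    rw [Nat.succ_add]
    exact (map_smulSub f _ _).trans_le (smulSub_mono _ ih)

lemma map_radPow_le (f : M →ₗ[A] N) (n : ℕ) : (radPow A M n).map f ≤ radPow A N n :=
  map_radPow_le_of_range_le f (k := 0) le_top n

lemma map_radPow_of_surjective {f : M →ₗ[A] N} (hf : Function.Surjective f) (n : ℕ) :
    (radPow A M n).map f = radPow A N n := by
  induction n with
  | zero => exact LinearMap.range_eq_top.mpr hf ▸ LinearMap.range_eq_map f |>.symm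
  | succ n ih => exact (map_smulSub f _ _).trans (congrArg _ ih)

lemma radPow_eq_bot_of_injective {f : M →ₗ[A] N} (hf : Function.Injective f) {n : ℕ}
    (h : radPow A N n = ⊥) : radPow A M n = ⊥ := by
  rw [← le_bot_iff, ← LinearMap.ker_eq_bot.mpr hf, LinearMap.le_ker_iff_map, ← le_bot_iff, ← h]
  exact map_radPow_le f n

lemma radPow_quotient_eq_bot (W : Submodule A M) {n : ℕ} (h : radPow A M n = ⊥) :
    radPow A (M ⧸ W) n = ⊥ := by
  rw [← map_radPow_of_surjective W.mkQ_surjective, h, Submodule.map_bot]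

lemma radPow_pi {ι : Type} [Fintype ι] [DecidableEq ι] (F : ι → Type)
    [∀ i, AddCommGroup (F i)] [∀ i, Module A (F i)] (n : ℕ) :
    radPow A (∀ i, F i) n = pi Set.univ fun i => radPow A (F i) n := by
  refine le_antisymm (fun x hx => mem_pi.mpr fun i _ =>
    map_radPow_le (LinearMap.proj i) n (mem_map_of_mem hx)) fun x hx => ?_
  rw [← Finset.univ_sum_single x]
  exact sum_mem fun i _ =>
    map_radPow_le (LinearMap.single A F i) n (mem_map_of_mem (hx i (Set.mem_univ i)))

lemma sup_radPow_eq_top {U : Submodule A M} (h : U ⊔ radPow A M 1 = ⊤) (k : ℕ) :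
    U ⊔ radPow A M k = ⊤ := by
  induction k with
  | zero => exact sup_top_eq U
  | succ k ih =>
    have hrad : radPow A M 1 ≤ U ⊔ radPow A M (k + 1) :=
      calc radPow A M 1 = smulSub (jacobsonRad A) (U ⊔ radPow A M k) := by rw [ih]; rfl
        _ ≤ smulSub (jacobsonRad A) U ⊔ radPow A M (k + 1) := smulSub_sup_le _ _ _
        _ ≤ U ⊔ radPow A M (k + 1) := sup_le_sup_right (smulSub_le _ _) _
    rw [eq_top_iff, ← h]
    exact sup_le le_sup_left hrad

end RadicalFiltration

section LocalModules

variable {C X : Type} [AddCommGroup C] [Module A C] [AddCommGroup X] [Module A X]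

lemma isSimpleModule_radPow_top_quotient (hC : IsSimpleModule A (C ⧸ radPow A C 1))
    {W : Submodule A C} (hW : W ≤ radPow A C 1) :
    IsSimpleModule A ((C ⧸ W) ⧸ radPow A (C ⧸ W) 1) := by
  rw [← map_radPow_of_surjective W.mkQ_surjective]
  exact IsSimpleModule.congr (quotientQuotientEquivQuotient W (radPow A C 1) hW)

lemma range_le_radPow_one_of_not_surjective [IsSimpleModule A (C ⧸ radPow A C 1)] {k : ℕ}
    (hC : radPow A C k = ⊥) {f : X →ₗ[A] C} (hf : ¬ Function.Surjective f) :
    LinearMap.range f ≤ radPow A C 1 := by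
  by_contra hle
  have hsup : LinearMap.range f ⊔ radPow A C 1 = ⊤ := by
    rw [sup_comm]
    exact (isSimpleModule_iff_isCoatom.mp ‹_›).2 _ (left_lt_sup.mpr hle)
  have := sup_radPow_eq_top hsup k
  rw [hC, sup_bot_eq] at this
  exact hf (LinearMap.range_eq_top.mp this)

lemma radPow_pred_le_ker_of_local [IsSimpleModule A (C ⧸ radPow A C 1)] {m : ℕ} (hm : 1 ≤ m)
    (hC : radPow A C m = ⊥) (f : X →ₗ[A] C)
    (hf : radPow A C (m - 1) ≠ ⊥ → ¬ Function.Surjective f) :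
    radPow A X (m - 1) ≤ LinearMap.ker f := by
  rw [LinearMap.le_ker_iff_map, ← le_bot_iff]
  by_cases hCm : radPow A C (m - 1) = ⊥
  · exact hCm ▸ map_radPow_le f (m - 1)
  · have := map_radPow_le_of_range_le f (range_le_radPow_one_of_not_surjective hC (hf hCm)) (m - 1)
    rwa [Nat.sub_add_cancel hm, hC] at this

end LocalModules

section RadicalMorphisms

variable {X N N' : Type} [AddCommGroup X] [Module A X] [AddCommGroup N] [Module A N]
  [AddCommGroup N'] [Module A N']

lemma IsRadMor.comp {f : X →ₗ[A] N} (hf : IsRadMor A f) (h : N →ₗ[A] N') :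
    IsRadMor A (h ∘ₗ f) := fun g => by
  simpa only [LinearMap.comp_assoc] using hf (g ∘ₗ h)

/-- Fitting's lemma: `ker (v ^ k)` is eventually a direct summand, so on an indecomposable module
it is `⊥` or everything. -/
lemma isUnit_one_sub_of_not_injective [IsNoetherian A X] [IsArtinian A X] (hX : Indecomp A X)
    {v : Module.End A X} (hv : ¬ Function.Injective v) : IsUnit (1 - v) := by
  obtain ⟨k, hk⟩ := Filter.eventually_atTop.mp v.eventually_isCompl_ker_pow_range_pow
  have hcompl := hk (k + 1) k.le_succ
  rcases hX.2 _ (isIdempotentElem_projection hcompl).eq with hP | hP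
  · have hker : LinearMap.ker v ≤ LinearMap.ker (v ^ (k + 1)) := by
      rw [pow_succ, Module.End.mul_eq_comp]
      exact LinearMap.ker_le_ker_comp v _
    rw [← range_projection hcompl, hP, LinearMap.range_zero, le_bot_iff,
      LinearMap.ker_eq_bot] at hker
    exact absurd hker hv
  · have hnil : v ^ (k + 1) = 0 := by
      rw [← LinearMap.ker_eq_top, ← range_projection hcompl, hP, Module.End.one_eq_id,
        LinearMap.range_id]
    exact IsNilpotent.isUnit_one_sub ⟨k + 1, hnil⟩

lemma isRadMor_of_ker_ne_bot [IsNoetherian A X] [IsArtinian A X] (hX : Indecomp A X)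
    {f : X →ₗ[A] N} (hf : LinearMap.ker f ≠ ⊥) : IsRadMor A f := fun g =>
  isUnit_one_sub_of_not_injective hX fun hinj => hf <| le_bot_iff.mp <|
    (LinearMap.ker_eq_bot.mpr hinj).subst (LinearMap.ker_le_ker_comp f g)

lemma existsUnique_eq_comp_mkQ {S : Submodule A X} {f : X →ₗ[A] N} (hS : S ≤ LinearMap.ker f) :
    ∃! g : (X ⧸ S) →ₗ[A] N, f = g ∘ₗ S.mkQ :=
  ⟨S.liftQ f hS, (S.liftQ_mkQ f hS).symm, fun _ hg => linearMap_qext S (hg ▸ S.liftQ_mkQ f hS)⟩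

end RadicalMorphisms

section AddCategory

variable {Q X N : Type} [AddCommGroup Q] [Module A Q] [AddCommGroup X] [Module A X]
  [AddCommGroup N] [Module A N] {ι : Type} {C : ι → Type} [∀ k, AddCommGroup (C k)]
  [∀ k, Module A (C k)]

lemma InAdd.exists_injective (h : InAdd A Q X) :
    ∃ (r : ℕ) (j : X →ₗ[A] Fin r → Q), Function.Injective j := by
  obtain ⟨r, Y, _, _, ⟨e⟩⟩ := h
  exact ⟨r, e.toLinearMap ∘ₗ LinearMap.inl A X Y, e.injective.comp LinearMap.inl_injective⟩

lemma inAdd_of_linearEquiv_pi [DecidableEq ι] (e : Q ≃ₗ[A] ∀ k, C k) (k : ι) :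
    InAdd A Q (C k) :=
  ⟨1, ∀ k' : {k' // k' ≠ k}, C k', inferInstance, inferInstance,
    ⟨({ Equiv.piSplitAt k C with map_add' := fun _ _ => rfl, map_smul' := fun _ _ => rfl } :
      (∀ k, C k) ≃ₗ[A] _).symm ≪≫ₗ e.symm ≪≫ₗ (LinearEquiv.funUnique (Fin 1) A Q).symm⟩⟩

lemma le_ker_of_forall_le_ker_comp (e : Q ≃ₗ[A] ∀ k, C k) (hN : InAdd A Q N)
    {f : X →ₗ[A] N} {S : Submodule A X} (h : ∀ k (g : N →ₗ[A] C k), S ≤ LinearMap.ker (g ∘ₗ f)) :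
    S ≤ LinearMap.ker f := by
  obtain ⟨r, j, hj⟩ := hN.exists_injective
  intro x hx
  have hcomp : ∀ t k, e (j (f x) t) k = 0 := fun t k =>
    LinearMap.mem_ker.mp <|
      h k (LinearMap.proj k ∘ₗ e.toLinearMap ∘ₗ (LinearMap.proj t : (Fin r → Q) →ₗ[A] Q) ∘ₗ j) hx
  rw [LinearMap.mem_ker, ← j.map_eq_zero_iff hj]
  exact funext fun t => e.map_eq_zero_iff.mp (funext (hcomp t))

theorem radPow_pred_le_ker_of_isRadMor [DecidableEq ι] (e : Q ≃ₗ[A] ∀ k, C k)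
    (hCloc : ∀ k, IsSimpleModule A (C k ⧸ radPow A (C k) 1)) {m : ℕ} (hm : 1 ≤ m)
    (hC : ∀ k, radPow A (C k) m = ⊥)
    (hX : ∀ (N : Type) [AddCommGroup N] [Module A N], InAdd A Q N →
      radPow A N (m - 1) ≠ ⊥ → ∀ f : X →ₗ[A] N, IsRadMor A f → ¬ Function.Surjective f)
    (hN : InAdd A Q N) {f : X →ₗ[A] N} (hf : IsRadMor A f) :
    radPow A X (m - 1) ≤ LinearMap.ker f :=
  le_ker_of_forall_le_ker_comp e hN fun k g =>
    have := hCloc k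
    radPow_pred_le_ker_of_local hm (hC k) _ fun hCk =>
      hX _ (inAdd_of_linearEquiv_pi e k) hCk _ (hf.comp g)

end AddCategory

section SemilocalModules

variable {ι : Type} [Fintype ι] [DecidableEq ι]

/-- `Submodule.quotientPi` without commutativity of the ring. -/
noncomputable def quotientPiEquiv {F : ι → Type} [∀ i, AddCommGroup (F i)]
    [∀ i, Module A (F i)] (p : ∀ i, Submodule A (F i)) :
    ((∀ i, F i) ⧸ pi Set.univ p) ≃ₗ[A] ∀ i, F i ⧸ p i :=
  let Φ : (∀ i, F i) →ₗ[A] ∀ i, F i ⧸ p i := LinearMap.pi fun i => (p i).mkQ ∘ₗ LinearMap.proj i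
  have hker : LinearMap.ker Φ = pi Set.univ p := by
    ext x
    simp [Φ, LinearMap.ker_pi, Submodule.mem_pi]
  have hsurj : Function.Surjective Φ := fun y =>
    ⟨fun i => (y i).out, funext fun i => Quotient.out_eq' (y i)⟩
  quotEquivOfEq _ _ hker.symm ≪≫ₗ Φ.quotKerEquivOfSurjective hsurj

noncomputable def quotientRadPowEquivPi {M : Type} [AddCommGroup M] [Module A M] {L : ι → Type}
    [∀ j, AddCommGroup (L j)] [∀ j, Module A (L j)] (ε : M ≃ₗ[A] ∀ j, L j) (n : ℕ) :
    (M ⧸ radPow A M n) ≃ₗ[A] ∀ j, L j ⧸ radPow A (L j) n :=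
  Quotient.equiv _ _ ε (map_radPow_of_surjective ε.surjective n)
    ≪≫ₗ quotEquivOfEq _ _ (radPow_pi L n) ≪≫ₗ quotientPiEquiv _

noncomputable def adrModuleOfEquivPi {M : Type} [AddCommGroup M] [Module A M] {L : ι → Type}
    [∀ j, AddCommGroup (L j)] [∀ j, Module A (L j)] (ε : M ≃ₗ[A] ∀ j, L j) (m : ℕ) :
    ADRModuleOf A M m ≃ₗ[A] ∀ k : (_ : Fin m) × ι, L k.2 ⧸ radPow A (L k.2) (k.1.1 + 1) :=
  LinearEquiv.piCongrRight (fun i => quotientRadPowEquivPi ε (i.1 + 1))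
    ≪≫ₗ (LinearEquiv.piCurry A fun (i : Fin m) (j : ι) => L j ⧸ radPow A (L j) (i.1 + 1)).symm

end SemilocalModules

theorem stmt13_general (K : Type) [Field K] (A : Type) [Ring A] [Algebra K A] [FiniteDimensional K A]
    (n : ℕ) (L : Fin n → Type) [∀ i, AddCommGroup (L i)] [∀ i, Module A (L i)]
    (hLloc : ∀ i, IsSimpleModule A ((L i) ⧸ radPow A (L i) 1))
    (M : Type) [AddCommGroup M] [Module A M] [Module.Finite A M]
    (hMsemi : Nonempty (M ≃ₗ[A] ((i : Fin n) → L i)))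
    (m : ℕ) (hm : 1 ≤ m) (hM1 : radPow A M m = ⊥)
    (X : Type) [AddCommGroup X] [Module A X]
    (hXind : Indecomp A X) (hXadd : InAdd A (ADRModuleOf A M m) X)
    (hXll : radPow A X (m - 1) ≠ ⊥)
    (hXF01 : ∀ (N : Type) [AddCommGroup N] [Module A N], InAdd A (ADRModuleOf A M m) N →
      radPow A N (m - 1) ≠ ⊥ → ∀ f : X →ₗ[A] N, IsRadMor A f → ¬ Function.Surjective f) :
    ∀ (N : Type) [AddCommGroup N] [Module A N], InAdd A (ADRModuleOf A M m) N →
      (∀ g : (X ⧸ radPow A X (m - 1)) →ₗ[A] N,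
        IsRadMor A (g ∘ₗ (radPow A X (m - 1)).mkQ)) ∧
      (∀ f : X →ₗ[A] N, IsRadMor A f →
        ∃! g : (X ⧸ radPow A X (m - 1)) →ₗ[A] N,
          f = g ∘ₗ (radPow A X (m - 1)).mkQ) := by
  obtain ⟨ε⟩ := hMsemi
  have : IsNoetherianRing A := isNoetherian_of_tower K inferInstance
  have : IsArtinianRing A := isArtinian_of_tower K inferInstance
  obtain ⟨r, j, hj⟩ := hXadd.exists_injective
  have : IsNoetherian A X := isNoetherian_of_injective j hj
  have : IsArtinian A X := isArtinian_of_injective j hj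
  have hL : ∀ i, radPow A (L i) m = ⊥ := fun i =>
    radPow_eq_bot_of_injective (f := ε.symm.toLinearMap ∘ₗ LinearMap.single A L i)
      (ε.symm.injective.comp (Pi.single_injective i)) hM1
  intro N _ _ hN
  refine ⟨fun g => isRadMor_of_ker_ne_bot hXind ?_, fun f hf => existsUnique_eq_comp_mkQ ?_⟩
  · exact ne_bot_of_le_ne_bot hXll ((ker_mkQ _).ge.trans (LinearMap.ker_le_ker_comp _ g))
  · exact radPow_pred_le_ker_of_isRadMor (adrModuleOfEquivPi ε m)
      (fun k => isSimpleModule_radPow_top_quotient (hLloc k.2) (radPow_le_one A _ (by omega)))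
      hm (fun k => radPow_quotient_eq_bot _ (hL k.2)) hXF01 hN hf

/-- Lemma 2.4: let `M` be a semilocal module of Loewy length `m` and let `X`
be an indecomposable direct summand of `⊕_{i=1}^m M/MJ^i` of Loewy length `m` (belonging to
`F_{0,1}`: `X` admits no surjective radical map to a summand of Loewy length `m`). Then for
every `N ∈ add(⊕_{i=1}^m M/MJ^i)`, precomposition with the canonical surjection
`ρ : X → X/XJ^{m-1}` gives a bijection `Hom_A(X/XJ^{m-1}, N) ≅ Rad_{mod A}(X, N)`. -/
theorem stmt13 (K : Type) [Field K] (A : Type) [Ring A] [Algebra K A] [FiniteDimensional K A]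
    (n : ℕ) (L : Fin n → Type) [∀ i, AddCommGroup (L i)] [∀ i, Module A (L i)]
    (hLloc : ∀ i, IsSimpleModule A ((L i) ⧸ radPow A (L i) 1))
    (M : Type) [AddCommGroup M] [Module A M] [Module.Finite A M]
    (hMsemi : Nonempty (M ≃ₗ[A] ((i : Fin n) → L i)))
    (m : ℕ) (hm : 1 ≤ m) (hM1 : radPow A M m = ⊥) (hM2 : radPow A M (m - 1) ≠ ⊥)
    (X : Type) [AddCommGroup X] [Module A X]
    (hXind : Indecomp A X) (hXadd : InAdd A (ADRModuleOf A M m) X)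
    (hXll : radPow A X (m - 1) ≠ ⊥)
    (hXF01 : ∀ (N : Type) [AddCommGroup N] [Module A N], InAdd A (ADRModuleOf A M m) N →
      radPow A N (m - 1) ≠ ⊥ → ∀ f : X →ₗ[A] N, IsRadMor A f → ¬ Function.Surjective f) :
    ∀ (N : Type) [AddCommGroup N] [Module A N], InAdd A (ADRModuleOf A M m) N →
      (∀ g : (X ⧸ radPow A X (m - 1)) →ₗ[A] N,
        IsRadMor A (g ∘ₗ (radPow A X (m - 1)).mkQ)) ∧
      (∀ f : X →ₗ[A] N, IsRadMor A f →
        ∃! g : (X ⧸ radPow A X (m - 1)) →ₗ[A] N,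
          f = g ∘ₗ (radPow A X (m - 1)).mkQ) :=
  stmt13_general K A n L hLloc M hMsemi m hm hM1 X hXind hXadd hXll hXF01
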